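/- For every ν ≥ 1/2 and R ≥ 1, ∫₀^∞ e^{−ντ} e^{−R sinh τ} (sinh τ)^{1/2} dτ ≤ C/(ν − 1/2 + R) for an absolute constant C. -/

import Mathlib

/-!
For `τ ≥ 0` we have `τ ≤ sinh τ ≤ exp τ`, so the integrand is at most
`exp (-(ν - 1/2 + R) τ)`, whose integral over `(0, ∞)` is `1 / (ν - 1/2 + R)`; hence `C = 1`.
-/

open Real MeasureTheory Set

lemma sinh_le_exp (x : ℝ) : sinh x ≤ exp x := by
  rw [sinh_eq]
  linarith [exp_pos x, exp_pos (-x)]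

lemma sqrt_sinh_le_exp_half (x : ℝ) : √(sinh x) ≤ exp (x / 2) :=
  exp_half x ▸ sqrt_le_sqrt (sinh_le_exp x)

lemma exp_mul_exp_mul_sqrt_sinh_le {ν R τ : ℝ} (hR : 0 ≤ R) (hτ : 0 ≤ τ) :
    exp (-(ν * τ)) * exp (-(R * sinh τ)) * √(sinh τ) ≤ exp (-(ν - 1/2 + R) * τ) :=
  calc exp (-(ν * τ)) * exp (-(R * sinh τ)) * √(sinh τ)
      ≤ exp (-(ν * τ)) * exp (-(R * τ)) * exp (τ / 2) := by
        gcongr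
        · exact self_le_sinh_iff.mpr hτ
        · exact sqrt_sinh_le_exp_half τ
    _ = exp (-(ν - 1/2 + R) * τ) := by
        rw [← exp_add, ← exp_add]
        ring_nf

theorem integral_exp_mul_exp_mul_sqrt_sinh_le {ν R : ℝ} (hR : 0 ≤ R) (h : 0 < ν - 1/2 + R) :
    ∫ τ in Ioi (0 : ℝ), exp (-(ν * τ)) * exp (-(R * sinh τ)) * √(sinh τ)
      ≤ 1 / (ν - 1/2 + R) :=
  calc ∫ τ in Ioi (0 : ℝ), exp (-(ν * τ)) * exp (-(R * sinh τ)) * √(sinh τ)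
      ≤ ∫ τ in Ioi (0 : ℝ), exp (-(ν - 1/2 + R) * τ) :=
        integral_mono_of_nonneg (ae_of_all _ fun _ ↦ by positivity)
          (exp_neg_integrableOn_Ioi 0 h)
          ((ae_restrict_mem measurableSet_Ioi).mono fun _ hτ ↦
            exp_mul_exp_mul_sqrt_sinh_le hR (le_of_lt hτ))
    _ = 1 / (ν - 1/2 + R) := by
        rw [integral_exp_mul_Ioi (neg_neg_of_pos h), mul_zero, exp_zero, neg_div_neg_eq]

theorem schlafli_derivative_tail_estimate :
    ∃ C : ℝ, ∀ ν : ℝ, (1/2 : ℝ) ≤ ν → ∀ R : ℝ, 1 ≤ R →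
      ∫ τ in Set.Ioi (0 : ℝ),
          Real.exp (-(ν * τ)) * Real.exp (-(R * Real.sinh τ)) * Real.sqrt (Real.sinh τ)
        ≤ C / (ν - 1/2 + R) :=
  ⟨1, fun _ hν _ hR ↦ integral_exp_mul_exp_mul_sqrt_sinh_le (by linarith) (by linarith)⟩
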